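/- arXiv:2211.06245 — 2 statements merged into one kernel-verified Lean document; each statement's English description precedes it below -/
import Mathlib

section
/- Let H = (V, E) be a k-uniform hypergraph with EI(H) = C_n. If H is 3-regular (every vertex has degree exactly 3), then |E| is minimum among all k-uniform hypergraphs H' = (V, E') with EI(H') = C_n; moreover |E| = 3n/k. -/
open Finset

/-- Edge intersection hypergraph of a hypergraph with edge set `E` on vertex set `Fin n`. -/
def EIh {n : ℕ} (E : Finset (Finset (Fin n))) : Finset (Finset (Fin n)) :=
  ((E ×ˢ E).filter fun p => p.1 ≠ p.2 ∧ 2 ≤ (p.1 ∩ p.2).card).image fun p => p.1 ∩ p.2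

/-- The edge set of the cycle `C_n` on vertex set `Fin n`. -/
def cyc (n : ℕ) [NeZero n] : Finset (Finset (Fin n)) :=
  Finset.univ.image fun i : Fin n => ({i, i + 1} : Finset (Fin n))

/-- Degree of a vertex in a hypergraph. -/
def hdeg {n : ℕ} (E : Finset (Finset (Fin n))) (v : Fin n) : ℕ :=
  (E.filter fun e => v ∈ e).card

/-! Double counting gives `∑ v, deg v = k |E|` for every `k`-uniform `E`. If `EI(E) = C_n`, each
vertex `v` lies on the two distinct cycle edges `{v - 1, v}` and `{v, v + 1}`, each the intersection
of two edges of `E` through `v`. Were `deg v ≤ 2`, those two edges of `E` would be all the edges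
through `v`, so both cycle edges would equal their common intersection. Hence `deg ≥ 3` everywhere,
and `k |E'| ≥ 3n = k |E|` when `E` is `3`-regular. -/

lemma exists_inter_eq_of_mem_EIh {n : ℕ} {E : Finset (Finset (Fin n))} {s : Finset (Fin n)}
    (hs : s ∈ EIh E) : ∃ a ∈ E, ∃ b ∈ E, a ≠ b ∧ a ∩ b = s := by
  simp only [EIh, mem_image, mem_filter, mem_product, Prod.exists] at hs
  obtain ⟨a, b, ⟨⟨ha, hb⟩, hab, -⟩, rfl⟩ := hs
  exact ⟨a, ha, b, hb, hab, rfl⟩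

lemma eq_inf_of_mem_EIh_of_hdeg_le_two {n : ℕ} {E : Finset (Finset (Fin n))} {v : Fin n}
    (hv : hdeg E v ≤ 2) {s : Finset (Fin n)} (hs : s ∈ EIh E) (hvs : v ∈ s) :
    s = (E.filter fun e => v ∈ e).inf id := by
  obtain ⟨a, ha, b, hb, hab, rfl⟩ := exists_inter_eq_of_mem_EIh hs
  have hsub : ({a, b} : Finset (Finset (Fin n))) ⊆ E.filter fun e => v ∈ e := by
    simp only [insert_subset_iff, singleton_subset_iff, mem_filter]
    exact ⟨⟨ha, mem_of_mem_inter_left hvs⟩, hb, mem_of_mem_inter_right hvs⟩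
  have hpair : ({a, b} : Finset (Finset (Fin n))) = E.filter fun e => v ∈ e :=
    eq_of_subset_of_card_le hsub (by rw [card_pair hab]; exact hv)
  simp [← hpair]

lemma three_le_hdeg_of_mem_EIh {n : ℕ} {E : Finset (Finset (Fin n))} {s t : Finset (Fin n)}
    (hs : s ∈ EIh E) (ht : t ∈ EIh E) (hst : s ≠ t) {v : Fin n} (hvs : v ∈ s) (hvt : v ∈ t) :
    3 ≤ hdeg E v := by
  by_contra! hv
  exact hst ((eq_inf_of_mem_EIh_of_hdeg_le_two (by omega) hs hvs).trans
    (eq_inf_of_mem_EIh_of_hdeg_le_two (by omega) ht hvt).symm)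

lemma pair_mem_cyc {n : ℕ} [NeZero n] (i : Fin n) : ({i, i + 1} : Finset (Fin n)) ∈ cyc n :=
  mem_image_of_mem _ (mem_univ i)

lemma pair_sub_one_ne_pair_add_one {n : ℕ} [NeZero n] (hn : 3 ≤ n) (v : Fin n) :
    ({v - 1, v} : Finset (Fin n)) ≠ {v, v + 1} := by
  intro h
  have hv : v + 1 ∈ ({v - 1, v} : Finset (Fin n)) := h ▸ by simp
  have h1 : (1 : Fin n).val = 1 := Fin.val_one' n ▸ Nat.mod_eq_of_lt (by omega)
  rcases mem_insert.mp hv with h2 | h2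
  · rw [eq_sub_iff_add_eq, add_assoc, add_eq_left] at h2
    have := congrArg Fin.val h2
    rw [Fin.val_add, h1, Nat.mod_eq_of_lt (by omega)] at this
    simp at this
  · rw [mem_singleton, add_eq_left] at h2
    simp [h2] at h1

lemma three_le_hdeg_of_EIh_eq_cyc {n : ℕ} [NeZero n] (hn : 3 ≤ n) {E : Finset (Finset (Fin n))}
    (hEI : EIh E = cyc n) (v : Fin n) : 3 ≤ hdeg E v := by
  have hprev : ({v - 1, v} : Finset (Fin n)) ∈ EIh E := by
    have h := pair_mem_cyc (v - 1)
    rwa [sub_add_cancel, ← hEI] at h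
  exact three_le_hdeg_of_mem_EIh hprev (hEI ▸ pair_mem_cyc v)
    (pair_sub_one_ne_pair_add_one hn v) (by simp) (by simp)

lemma sum_hdeg {n : ℕ} (E : Finset (Finset (Fin n))) :
    ∑ v, hdeg E v = ∑ e ∈ E, e.card := by
  simp only [hdeg, card_filter]
  rw [sum_comm]
  simp

lemma sum_hdeg_of_uniform {n k : ℕ} {E : Finset (Finset (Fin n))}
    (hunif : ∀ e ∈ E, e.card = k) : ∑ v, hdeg E v = E.card * k := by
  rw [sum_hdeg, sum_congr rfl hunif, sum_const, smul_eq_mul]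

theorem stmt_1_general (n k : ℕ) [NeZero n] (hn : 3 ≤ n) (E : Finset (Finset (Fin n)))
    (hunif : ∀ e ∈ E, e.card = k)
    (hreg : ∀ v : Fin n, hdeg E v = 3) :
    (∀ E' : Finset (Finset (Fin n)), (∀ e ∈ E', e.card = k) → EIh E' = cyc n →
      E.card ≤ E'.card) ∧ E.card * k = 3 * n := by
  have hE : E.card * k = 3 * n := by
    simp [← sum_hdeg_of_uniform hunif, hreg, mul_comm]
  refine ⟨fun E' hunif' hEI' => ?_, hE⟩
  have hk : 0 < k := Nat.pos_of_ne_zero fun hk => by simp [hk] at hE; omega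
  have hE' : 3 * n ≤ E'.card * k := by
    rw [← sum_hdeg_of_uniform hunif']
    simpa [mul_comm] using
      sum_le_sum fun v (_ : v ∈ univ) => three_le_hdeg_of_EIh_eq_cyc hn hEI' v
  exact Nat.le_of_mul_le_mul_right (hE ▸ hE') hk

theorem stmt_1 (n k : ℕ) [NeZero n] (hn : 3 ≤ n) (E : Finset (Finset (Fin n)))
    (hunif : ∀ e ∈ E, e.card = k) (hEI : EIh E = cyc n)
    (hreg : ∀ v : Fin n, hdeg E v = 3) :
    (∀ E' : Finset (Finset (Fin n)), (∀ e ∈ E', e.card = k) → EIh E' = cyc n →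
      E.card ≤ E'.card) ∧ E.card * k = 3 * n :=
  stmt_1_general n k hn E hunif hreg
end

section
/- Let n ≥ 14 with n ≡ 2 (mod 4). The 4-uniform hypergraph H on V = {1,...,n} with hyperedges E = { {i, i+1, i+2, i+3} : i ∈ {1, 3, ..., n−1} } ∪ { {i, i+1, n/2 + i − 1, n/2 + i} : i ∈ {2, 4, ..., n/2 − 1} } ∪ { {n, 1, n/2 + 1, n/2 + 2} } (indices mod n) satisfies EI(H) = C_n and |E| = ⌈3n/4⌉. -/
open Finset
open Fin.NatCast

/-!
Put `m = n / 2`, which is odd. Every hyperedge is the union of two cycle edges, its blocks: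
`{i, i+1} ∪ {i+2, i+3}` for odd `i`, and `{j, j+1} ∪ {m+j-1, m+j}` for even `2 ≤ j ≤ m + 1`,
the case `j = m + 1` being the extra hyperedge `{n, 1, m+1, m+2}`. If `e ≠ f` are hyperedges and
`f` is of the second kind or both are of the first kind, then `e` meets at most one block of `f`
(blocks of the first kind start at odd, those of the second kind at even vertices, and the two
blocks of a second-kind hyperedge are `m - 1 ≥ 6` apart). Hence `e ∩ f` lies in a cycle edge,
and equals it when it has two elements. Conversely, the cycle edge `{k, k+1}` is a block shared
by the first-kind hyperedges at `k - 2` and `k` when `k` is odd, and it is the middle pair of the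
first-kind hyperedge at `k - 1` as well as a block of a second-kind one when `k` is even. Since a
hyperedge meets both of its own blocks, the `m + (m + 1) / 2 = ⌈3n/4⌉` hyperedges are distinct.
-/

namespace Fin

theorem eq_natCast_iff_of_lt_two_mul {n a : ℕ} [NeZero n] (ha : a < 2 * n) {x : Fin n} :
    x = (a : Fin n) ↔ x.val = a ∨ x.val + n = a := by
  rw [Fin.ext_iff, Fin.val_natCast]
  rcases Nat.lt_or_ge a n with h | h
  · rw [Nat.mod_eq_of_lt h]; omega
  · rw [Nat.mod_eq_sub_mod h, Nat.mod_eq_of_lt (by omega)]; omega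

end Fin

theorem mem_EIh {n : ℕ} {E : Finset (Finset (Fin n))} {s : Finset (Fin n)} :
    s ∈ EIh E ↔ ∃ e ∈ E, ∃ f ∈ E, e ≠ f ∧ 2 ≤ #(e ∩ f) ∧ e ∩ f = s := by
  simp [EIh, and_assoc]

namespace EIhCycle

variable {n : ℕ} [NeZero n]

variable (n) in
def cycleEdge (k : ℕ) : Finset (Fin n) := {(k : Fin n), ((k + 1 : ℕ) : Fin n)}

theorem mem_cycleEdge {k : ℕ} (hk : k + 1 < 2 * n) {x : Fin n} :
    x ∈ cycleEdge n k ↔ x.val = k ∨ x.val + n = k ∨ x.val = k + 1 ∨ x.val + n = k + 1 := by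
  rw [cycleEdge, mem_insert, mem_singleton, Fin.eq_natCast_iff_of_lt_two_mul (by omega),
    Fin.eq_natCast_iff_of_lt_two_mul hk, or_assoc]

theorem cycleEdge_add_self (k : ℕ) : cycleEdge n (k + n) = cycleEdge n k := by
  simp [cycleEdge, add_right_comm k n 1]

theorem cycleEdge_val (v : Fin n) : cycleEdge n v.val = {v, v + 1} := by
  simp [cycleEdge]

theorem cycleEdge_mem_cyc (k : ℕ) : cycleEdge n k ∈ cyc n :=
  mem_image.2 ⟨k, mem_univ _, by rw [cycleEdge, Nat.cast_succ]⟩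

theorem card_cycleEdge (hn : 2 ≤ n) {k : ℕ} (hk : k < n) : #(cycleEdge n k) = 2 := by
  refine card_pair fun h => ?_
  rw [Fin.eq_natCast_iff_of_lt_two_mul (by omega), Fin.val_cast_of_lt hk] at h
  omega

theorem exists_inter_subset_cycleEdge_of_disjoint_or {e : Finset (Fin n)} {a b : ℕ}
    (h : Disjoint e (cycleEdge n a) ∨ Disjoint e (cycleEdge n b)) :
    ∃ k, e ∩ (cycleEdge n a ∪ cycleEdge n b) ⊆ cycleEdge n k := by
  rcases h with h | h
  · refine ⟨b, fun x hx => ?_⟩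
    rw [mem_inter, mem_union] at hx
    exact hx.2.resolve_left (disjoint_left.1 h hx.1)
  · refine ⟨a, fun x hx => ?_⟩
    rw [mem_inter, mem_union] at hx
    exact hx.2.resolve_right (disjoint_left.1 h hx.1)

theorem not_disjoint_union_cycleEdge_or (a b : ℕ) :
    ¬ (Disjoint (cycleEdge n a ∪ cycleEdge n b) (cycleEdge n a) ∨
      Disjoint (cycleEdge n a ∪ cycleEdge n b) (cycleEdge n b)) := by
  rintro (h | h)
  · exact (insert_nonempty _ _ : (cycleEdge n a).Nonempty).ne_empty
      ((disjoint_self_iff_empty _).1 (h.mono_left subset_union_left))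
  · exact (insert_nonempty _ _ : (cycleEdge n b).Nonempty).ne_empty
      ((disjoint_self_iff_empty _).1 (h.mono_left subset_union_right))

variable (n) in
def intervalEdge (i : ℕ) : Finset (Fin n) := cycleEdge n i ∪ cycleEdge n (i + 2)

variable (n) in
def chordEdge (m j : ℕ) : Finset (Fin n) := cycleEdge n j ∪ cycleEdge n (m + j - 1)

theorem mem_intervalEdge {i : ℕ} (hi : i + 3 < 2 * n) {x : Fin n} :
    x ∈ intervalEdge n i ↔ (x.val = i ∨ x.val + n = i ∨ x.val = i + 1 ∨ x.val + n = i + 1) ∨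
      (x.val = i + 2 ∨ x.val + n = i + 2 ∨ x.val = i + 2 + 1 ∨ x.val + n = i + 2 + 1) := by
  rw [intervalEdge, mem_union, mem_cycleEdge (by omega), mem_cycleEdge hi]

theorem mem_chordEdge {m j : ℕ} (hm : 1 ≤ m) (hj : m + j < 2 * n) {x : Fin n} :
    x ∈ chordEdge n m j ↔ (x.val = j ∨ x.val + n = j ∨ x.val = j + 1 ∨ x.val + n = j + 1) ∨
      (x.val = m + j - 1 ∨ x.val + n = m + j - 1 ∨ x.val = m + j ∨ x.val + n = m + j) := by
  rw [chordEdge, mem_union, mem_cycleEdge (by omega), mem_cycleEdge (by omega),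
    Nat.sub_add_cancel (by omega : 1 ≤ m + j)]

theorem intervalEdge_disjoint_or (hn : n % 2 = 0) (h6 : 6 ≤ n) {i j : ℕ} (hi : i < n)
    (hj : j < n) (hi2 : i % 2 = 1) (hj2 : j % 2 = 1) (hij : i ≠ j) :
    Disjoint (intervalEdge n i) (cycleEdge n j) ∨
      Disjoint (intervalEdge n i) (cycleEdge n (j + 2)) := by
  by_contra h
  rw [not_or, not_disjoint_iff, not_disjoint_iff] at h
  obtain ⟨⟨a, haA, haP⟩, ⟨b, hbA, hbQ⟩⟩ := h
  rw [mem_intervalEdge (by omega)] at haA hbA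
  rw [mem_cycleEdge (by omega)] at haP hbQ
  have := a.isLt; have := b.isLt
  omega

theorem intervalEdge_disjoint_chordEdge_or {m : ℕ} (hnm : n = 2 * m) (h6 : 6 ≤ m) {i j : ℕ}
    (hi : i < n) (hj : j ≤ m + 1) :
    Disjoint (intervalEdge n i) (cycleEdge n j) ∨
      Disjoint (intervalEdge n i) (cycleEdge n (m + j - 1)) := by
  by_contra h
  rw [not_or, not_disjoint_iff, not_disjoint_iff] at h
  obtain ⟨⟨a, haA, haP⟩, ⟨b, hbA, hbQ⟩⟩ := h
  rw [mem_intervalEdge (by omega)] at haA hbA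
  rw [mem_cycleEdge (by omega)] at haP hbQ
  have := a.isLt; have := b.isLt
  omega

theorem chordEdge_disjoint_or {m : ℕ} (hnm : n = 2 * m) (hm : m % 2 = 1) (h3 : 3 ≤ m)
    {j j' : ℕ} (hj : j ≤ m + 1) (hj' : j' ≤ m + 1) (hj2 : j % 2 = 0) (hj2' : j' % 2 = 0)
    (hjj' : j ≠ j') :
    Disjoint (chordEdge n m j) (cycleEdge n j') ∨
      Disjoint (chordEdge n m j) (cycleEdge n (m + j' - 1)) := by
  by_contra h
  rw [not_or, not_disjoint_iff, not_disjoint_iff] at h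
  obtain ⟨⟨a, haA, haP⟩, ⟨b, hbA, hbQ⟩⟩ := h
  rw [mem_chordEdge (by omega) (by omega)] at haA hbA
  rw [mem_cycleEdge (by omega)] at haP hbQ
  have := a.isLt; have := b.isLt
  omega

theorem eq_of_intervalEdge_eq (hn : n % 2 = 0) (h6 : 6 ≤ n) {i j : ℕ} (hi : i < n) (hj : j < n)
    (hi2 : i % 2 = 1) (hj2 : j % 2 = 1) (h : intervalEdge n i = intervalEdge n j) : i = j := by
  by_contra hij
  exact not_disjoint_union_cycleEdge_or j (j + 2)
    (h ▸ intervalEdge_disjoint_or hn h6 hi hj hi2 hj2 hij)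

theorem eq_of_chordEdge_eq {m : ℕ} (hnm : n = 2 * m) (hm : m % 2 = 1) (h3 : 3 ≤ m) {j j' : ℕ}
    (hj : j ≤ m + 1) (hj' : j' ≤ m + 1) (hj2 : j % 2 = 0) (hj2' : j' % 2 = 0)
    (h : chordEdge n m j = chordEdge n m j') : j = j' := by
  by_contra hjj'
  exact not_disjoint_union_cycleEdge_or j' (m + j' - 1)
    (h ▸ chordEdge_disjoint_or hnm hm h3 hj hj' hj2 hj2' hjj')

theorem intervalEdge_ne_chordEdge {m : ℕ} (hnm : n = 2 * m) (h6 : 6 ≤ m) {i j : ℕ} (hi : i < n)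
    (hj : j ≤ m + 1) : intervalEdge n i ≠ chordEdge n m j := fun h =>
  not_disjoint_union_cycleEdge_or j (m + j - 1)
    (h ▸ intervalEdge_disjoint_chordEdge_or hnm h6 hi hj)

theorem cycleEdge_succ_subset_intervalEdge (i : ℕ) : cycleEdge n (i + 1) ⊆ intervalEdge n i :=
  insert_subset_iff.2 ⟨mem_union_left _ (mem_insert_of_mem (mem_singleton_self _)),
    singleton_subset_iff.2 (mem_union_right _ (mem_insert_self _ _))⟩

def hyperedges (n m : ℕ) [NeZero n] : Finset (Finset (Fin n)) :=
  {i ∈ range n | i % 2 = 1}.image (intervalEdge n) ∪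
    {j ∈ Icc 2 (m + 1) | j % 2 = 0}.image (chordEdge n m)

theorem intervalEdge_mem_hyperedges {m i : ℕ} (hi : i < n) (hi2 : i % 2 = 1) :
    intervalEdge n i ∈ hyperedges n m :=
  mem_union_left _ (mem_image_of_mem _ (mem_filter.2 ⟨mem_range.2 hi, hi2⟩))

theorem chordEdge_mem_hyperedges {m j : ℕ} (hj : 2 ≤ j) (hj' : j ≤ m + 1) (hj2 : j % 2 = 0) :
    chordEdge n m j ∈ hyperedges n m :=
  mem_union_right _ (mem_image_of_mem _ (mem_filter.2 ⟨mem_Icc.2 ⟨hj, hj'⟩, hj2⟩))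

theorem exists_inter_subset_cycleEdge {m : ℕ} (hnm : n = 2 * m) (hm : m % 2 = 1) (h7 : 7 ≤ m)
    {e f : Finset (Fin n)} (he : e ∈ hyperedges n m) (hf : f ∈ hyperedges n m) (hef : e ≠ f) :
    ∃ k, e ∩ f ⊆ cycleEdge n k := by
  simp only [hyperedges, mem_union, mem_image, mem_filter, mem_range, mem_Icc] at he hf
  rcases he with ⟨i, ⟨hi, hi2⟩, rfl⟩ | ⟨j, ⟨⟨-, hj⟩, hj2⟩, rfl⟩ <;>
    rcases hf with ⟨i', ⟨hi', hi2'⟩, rfl⟩ | ⟨j', ⟨⟨-, hj'⟩, hj2'⟩, rfl⟩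
  · exact exists_inter_subset_cycleEdge_of_disjoint_or
      (intervalEdge_disjoint_or (by omega) (by omega) hi hi' hi2 hi2' (ne_of_apply_ne _ hef))
  · exact exists_inter_subset_cycleEdge_of_disjoint_or
      (intervalEdge_disjoint_chordEdge_or hnm (by omega) hi hj')
  · rw [inter_comm]
    exact exists_inter_subset_cycleEdge_of_disjoint_or
      (intervalEdge_disjoint_chordEdge_or hnm (by omega) hi' hj)
  · exact exists_inter_subset_cycleEdge_of_disjoint_or
      (chordEdge_disjoint_or hnm hm (by omega) hj hj' hj2 hj2' (ne_of_apply_ne _ hef))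

theorem exists_cycleEdge_subset_inter_of_odd {m k : ℕ} (hnm : n = 2 * m) (h7 : 7 ≤ m)
    (hk : k < n) (hk2 : k % 2 = 1) :
    ∃ e ∈ hyperedges n m, ∃ f ∈ hyperedges n m, e ≠ f ∧ cycleEdge n k ⊆ e ∩ f := by
  obtain ⟨i, hi, hi2, hik, hki⟩ :
      ∃ i < n, i % 2 = 1 ∧ i ≠ k ∧ cycleEdge n k = cycleEdge n (i + 2) := by
    by_cases hk1 : k = 1
    · exact ⟨n - 1, by omega, by omega, by omega, by
        rw [← cycleEdge_add_self k]; congr 1; omega⟩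
    · exact ⟨k - 2, by omega, by omega, by omega, by congr 1; omega⟩
  refine ⟨intervalEdge n i, intervalEdge_mem_hyperedges hi hi2, intervalEdge n k,
    intervalEdge_mem_hyperedges hk hk2,
    fun h => hik (eq_of_intervalEdge_eq (by omega) (by omega) hi hk hi2 hk2 h), ?_⟩
  exact subset_inter (hki ▸ subset_union_right) subset_union_left

theorem exists_cycleEdge_subset_inter_of_even {m k : ℕ} (hnm : n = 2 * m) (hm : m % 2 = 1)
    (h7 : 7 ≤ m) (hk : k < n) (hk2 : k % 2 = 0) :
    ∃ e ∈ hyperedges n m, ∃ f ∈ hyperedges n m, e ≠ f ∧ cycleEdge n k ⊆ e ∩ f := by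
  obtain ⟨i, hi, hi2, hki⟩ : ∃ i < n, i % 2 = 1 ∧ cycleEdge n k = cycleEdge n (i + 1) := by
    by_cases hk0 : k = 0
    · exact ⟨n - 1, by omega, by omega, by rw [← cycleEdge_add_self k]; congr 1; omega⟩
    · exact ⟨k - 1, by omega, by omega, by congr 1; omega⟩
  obtain ⟨j, hj, hj', hj2, hkj⟩ : ∃ j, 2 ≤ j ∧ j ≤ m + 1 ∧ j % 2 = 0 ∧
      (cycleEdge n k = cycleEdge n j ∨ cycleEdge n k = cycleEdge n (m + j - 1)) := by
    by_cases hkm : 2 ≤ k ∧ k ≤ m + 1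
    · exact ⟨k, hkm.1, hkm.2, hk2, Or.inl rfl⟩
    by_cases hk0 : k = 0
    · exact ⟨m + 1, by omega, by omega, by omega, Or.inr (by
        rw [← cycleEdge_add_self k]; congr 1; omega)⟩
    · exact ⟨k + 1 - m, by omega, by omega, by omega, Or.inr (by congr 1; omega)⟩
  refine ⟨intervalEdge n i, intervalEdge_mem_hyperedges hi hi2, chordEdge n m j,
    chordEdge_mem_hyperedges hj hj' hj2, intervalEdge_ne_chordEdge hnm (by omega) hi hj',
    subset_inter (hki ▸ cycleEdge_succ_subset_intervalEdge i) ?_⟩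
  rcases hkj with h | h <;> rw [h]
  exacts [subset_union_left, subset_union_right]

theorem EIh_hyperedges {m : ℕ} (hnm : n = 2 * m) (hm : m % 2 = 1) (h7 : 7 ≤ m) :
    EIh (hyperedges n m) = cyc n := by
  ext s
  rw [mem_EIh]
  constructor
  · rintro ⟨e, he, f, hf, hef, hcard, rfl⟩
    obtain ⟨k, hk⟩ := exists_inter_subset_cycleEdge hnm hm h7 he hf hef
    rw [eq_of_subset_of_card_le hk (card_le_two.trans hcard)]
    exact cycleEdge_mem_cyc k
  · intro hs
    obtain ⟨v, -, rfl⟩ := mem_image.1 hs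
    rw [← cycleEdge_val]
    obtain ⟨e, he, f, hf, hef, hsub⟩ := (Nat.mod_two_eq_zero_or_one v.val).elim
      (exists_cycleEdge_subset_inter_of_even hnm hm h7 v.isLt)
      (exists_cycleEdge_subset_inter_of_odd hnm h7 v.isLt)
    obtain ⟨k, hk⟩ := exists_inter_subset_cycleEdge hnm hm h7 he hf hef
    have hcard : #(cycleEdge n v) = 2 := card_cycleEdge (by omega) v.isLt
    have heq : cycleEdge n v = e ∩ f :=
      eq_of_subset_of_card_le hsub ((card_le_card hk).trans (hcard ▸ card_le_two))
    exact ⟨e, he, f, hf, hef, heq ▸ hcard.ge, heq.symm⟩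

theorem card_filter_range_two_mul_odd (t : ℕ) : #{i ∈ range (2 * t) | i % 2 = 1} = t := by
  have h : {i ∈ range (2 * t) | i % 2 = 1} = (range t).image fun s => 2 * s + 1 := by
    ext i
    simp only [mem_filter, mem_range, mem_image]
    exact ⟨fun hi => ⟨i / 2, by omega, by omega⟩, by rintro ⟨s, hs, rfl⟩; omega⟩
  rw [h, card_image_of_injective _ fun a b h => by omega, card_range]

theorem card_filter_Icc_two_mul_even (t : ℕ) : #{j ∈ Icc 2 (2 * t) | j % 2 = 0} = t := by
  have h : {j ∈ Icc 2 (2 * t) | j % 2 = 0} = (Icc 1 t).image fun s => 2 * s := by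
    ext j
    simp only [mem_filter, mem_Icc, mem_image]
    exact ⟨fun hj => ⟨j / 2, by omega, by omega⟩, by rintro ⟨s, hs, rfl⟩; omega⟩
  rw [h, card_image_of_injective _ fun a b h => by omega, Nat.card_Icc, Nat.add_sub_cancel]

theorem card_hyperedges {m : ℕ} (hnm : n = 2 * m) (hm : m % 2 = 1) (h7 : 7 ≤ m) :
    #(hyperedges n m) = m + (m + 1) / 2 := by
  have hA : #({i ∈ range n | i % 2 = 1}.image (intervalEdge n)) = m := by
    rw [card_image_of_injOn, hnm, card_filter_range_two_mul_odd]
    intro i hi j hj h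
    rw [coe_filter] at hi hj
    exact eq_of_intervalEdge_eq (by omega) (by omega) (mem_range.1 hi.1) (mem_range.1 hj.1)
      hi.2 hj.2 h
  have hB : #({j ∈ Icc 2 (m + 1) | j % 2 = 0}.image (chordEdge n m)) = (m + 1) / 2 := by
    obtain ⟨t, ht⟩ : ∃ t, m + 1 = 2 * t := ⟨(m + 1) / 2, by omega⟩
    rw [card_image_of_injOn, ht, card_filter_Icc_two_mul_even]
    · omega
    intro i hi j hj h
    rw [coe_filter] at hi hj
    exact eq_of_chordEdge_eq hnm hm (by omega) (mem_Icc.1 hi.1).2 (mem_Icc.1 hj.1).2 hi.2 hj.2 h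
  rw [hyperedges, card_union_of_disjoint, hA, hB]
  simp only [disjoint_left, mem_image, mem_filter, mem_range, mem_Icc]
  rintro _ ⟨i, ⟨hi, -⟩, rfl⟩ ⟨j, ⟨⟨-, hj⟩, -⟩, h⟩
  exact intervalEdge_ne_chordEdge hnm (by omega) hi hj h.symm

theorem union_eq_hyperedges {m : ℕ} (hnm : n = 2 * m) (hm : m % 2 = 1) :
    (((Finset.range n).filter fun i => i % 2 = 1).image fun i : ℕ =>
        ({(i : Fin n), ((i + 1 : ℕ) : Fin n), ((i + 2 : ℕ) : Fin n),
          ((i + 3 : ℕ) : Fin n)} : Finset (Fin n))) ∪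
      (((Finset.Icc 2 (m - 1)).filter fun i => i % 2 = 0).image fun i : ℕ =>
        ({(i : Fin n), ((i + 1 : ℕ) : Fin n), ((m + i - 1 : ℕ) : Fin n),
          ((m + i : ℕ) : Fin n)} : Finset (Fin n))) ∪
      {({(n : Fin n), 1, ((m + 1 : ℕ) : Fin n),
        ((m + 2 : ℕ) : Fin n)} : Finset (Fin n))} = hyperedges n m := by
  have hA : ∀ i : ℕ, ({(i : Fin n), ((i + 1 : ℕ) : Fin n), ((i + 2 : ℕ) : Fin n),
      ((i + 3 : ℕ) : Fin n)} : Finset (Fin n)) = intervalEdge n i := fun i => by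
    rw [intervalEdge, cycleEdge, cycleEdge, insert_union, ← insert_eq]
  have hB : ∀ j : ℕ, ({(j : Fin n), ((j + 1 : ℕ) : Fin n), ((m + j - 1 : ℕ) : Fin n),
      ((m + j : ℕ) : Fin n)} : Finset (Fin n)) = chordEdge n m j := fun j => by
    rw [chordEdge, cycleEdge, cycleEdge, insert_union, ← insert_eq, Nat.sub_add_cancel (by omega)]
  have hC : ({(n : Fin n), 1, ((m + 1 : ℕ) : Fin n), ((m + 2 : ℕ) : Fin n)} : Finset (Fin n)) =
      chordEdge n m (m + 1) := by
    ext x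
    rw [mem_chordEdge (by omega) (by omega), ← Nat.cast_one (R := Fin n)]
    simp only [mem_insert, mem_singleton]
    rw [Fin.eq_natCast_iff_of_lt_two_mul (by omega), Fin.eq_natCast_iff_of_lt_two_mul (by omega),
      Fin.eq_natCast_iff_of_lt_two_mul (by omega), Fin.eq_natCast_iff_of_lt_two_mul (by omega)]
    omega
  have hIcc :
      {j ∈ Icc 2 (m + 1) | j % 2 = 0} = insert (m + 1) {j ∈ Icc 2 (m - 1) | j % 2 = 0} := by
    ext j
    simp only [mem_filter, mem_Icc, mem_insert]
    omega
  rw [hyperedges, hIcc, image_insert, insert_eq (chordEdge n m (m + 1)), ← hC, union_comm {_},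
    ← union_assoc, image_congr fun i _ => hA i, image_congr fun j _ => hB j]

end EIhCycle

theorem stmt_8 (n : ℕ) [NeZero n] (hn : 14 ≤ n) (hmod : n % 4 = 2) :
    letI E : Finset (Finset (Fin n)) :=
      (((Finset.range n).filter fun i => i % 2 = 1).image fun i : ℕ =>
        ({(i : Fin n), ((i + 1 : ℕ) : Fin n), ((i + 2 : ℕ) : Fin n),
          ((i + 3 : ℕ) : Fin n)} : Finset (Fin n))) ∪
      (((Finset.Icc 2 (n / 2 - 1)).filter fun i => i % 2 = 0).image fun i : ℕ =>
        ({(i : Fin n), ((i + 1 : ℕ) : Fin n), ((n / 2 + i - 1 : ℕ) : Fin n),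
          ((n / 2 + i : ℕ) : Fin n)} : Finset (Fin n))) ∪
      {({(n : Fin n), 1, ((n / 2 + 1 : ℕ) : Fin n),
        ((n / 2 + 2 : ℕ) : Fin n)} : Finset (Fin n))}
    EIh E = cyc n ∧ E.card = (3 * n + 3) / 4 := by
  have hnm : n = 2 * (n / 2) := by omega
  have hm : n / 2 % 2 = 1 := by omega
  rw [EIhCycle.union_eq_hyperedges hnm hm]
  refine ⟨EIhCycle.EIh_hyperedges hnm hm (by omega), ?_⟩
  rw [EIhCycle.card_hyperedges hnm hm (by omega)]
  omega
end
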